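/- arXiv:1903.09070 — 5 statements merged into one kernel-verified Lean document; each statement's English description precedes it below -/
import Mathlib

section
/- Let φ(x) = 1 - x + Σ_{k=2}^∞ (-1)^k x^k / (q_2^{k-1} q_3^{k-2} ⋯ q_{k-1}² q_k), where q_2 ≥ 2 and the q_k are increasing in k (q_2 ≤ q_3 ≤ q_4 ≤ ...). Then φ(q_2) > 0. -/
open Filter Finset

/-- `phiDenom q k = q_2^{k-1} q_3^{k-2} ⋯ q_{k-1}² q_k = ∏_{j=2}^{k} q_j^{k+1-j}`
(equal to `1` for `k = 0, 1`), the denominator of the `k`-th Taylor coefficient of `φ`. -/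
def phiDenom (q : ℕ → ℝ) (k : ℕ) : ℝ := ∏ j ∈ Finset.Icc 2 k, q j ^ (k + 1 - j)

/-!
Write `a_k = q₂ᵏ / phiDenom q k`, so that `φ(q₂) = ∑ (-1)ᵏ a_k`. Since
`phiDenom q (k+1) = phiDenom q k · q₂ q₃ ⋯ q_{k+1}`, we get `a_{k+1} = a_k / (q₃ ⋯ q_{k+1})`;
hence `a₀ = 1`, `a₁ = a₂ = q₂`, `a₃ = q₂ / q₃`, and `a_k` strictly decreases from `k = 2` on
because every `q_j ≥ q₂ ≥ 2`. Grouping the series as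
`(1 - q₂/q₃) + (a₄ - a₅) + (a₆ - a₇) + ⋯` exhibits a nonnegative head and positive pairs.
-/

theorem tsum_pos_of_forall_add_pos {f : ℕ → ℝ} (hf : Summable f)
    (h : ∀ m, 0 < f (2 * m) + f (2 * m + 1)) : 0 < ∑' n, f n := by
  have heven : Summable fun m => f (2 * m) :=
    hf.comp_injective fun a b hab => by omega
  have hodd : Summable fun m => f (2 * m + 1) :=
    hf.comp_injective fun a b hab => by omega
  rw [← tsum_even_add_odd heven hodd, ← heven.tsum_add hodd]
  exact (heven.add hodd).tsum_pos (fun m => (h m).le) 0 (h 0)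

section phiDenom

variable (q : ℕ → ℝ)

theorem phiDenom_pos (hq : ∀ n, 2 ≤ n → 0 < q n) (k : ℕ) : 0 < phiDenom q k :=
  prod_pos fun j hj => pow_pos (hq j (mem_Icc.1 hj).1) _

theorem phiDenom_succ (k : ℕ) :
    phiDenom q (k + 1) = phiDenom q k * ∏ j ∈ Icc 2 (k + 1), q j := by
  have hlast : ∏ j ∈ Icc 2 (k + 1), q j ^ (k + 1 - j) = phiDenom q k :=
    (prod_subset (Icc_subset_Icc_right k.le_succ) fun j hj hjk => by
      rw [show k + 1 - j = 0 by simp only [mem_Icc] at hj hjk; omega, pow_zero]).symm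
  rw [phiDenom, ← hlast, ← prod_mul_distrib]
  refine prod_congr rfl fun j hj => ?_
  rw [← pow_succ, show k + 1 + 1 - j = k + 1 - j + 1 by simp only [mem_Icc] at hj; omega]

theorem pow_div_phiDenom_succ (hq2 : q 2 ≠ 0) {k : ℕ} (hk : 1 ≤ k) :
    q 2 ^ (k + 1) / phiDenom q (k + 1) = q 2 ^ k / phiDenom q k / ∏ j ∈ Ioc 2 (k + 1), q j := by
  rw [phiDenom_succ, Icc_eq_cons_Ioc (by omega), prod_cons, pow_succ]
  field_simp

theorem pow_div_phiDenom_succ_lt (hq : ∀ n, 2 ≤ n → 1 < q n) {k : ℕ} (hk : 2 ≤ k) :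
    q 2 ^ (k + 1) / phiDenom q (k + 1) < q 2 ^ k / phiDenom q k := by
  have hpos : ∀ n, 2 ≤ n → 0 < q n := fun n hn => one_pos.trans (hq n hn)
  rw [pow_div_phiDenom_succ q (hpos 2 le_rfl).ne' (by omega)]
  refine div_lt_self (div_pos (pow_pos (hpos 2 le_rfl) k) (phiDenom_pos q hpos k)) ?_
  calc (1 : ℝ) = ∏ _j ∈ Ioc 2 (k + 1), 1 := prod_const_one.symm
    _ < ∏ j ∈ Ioc 2 (k + 1), q j :=
      prod_lt_prod_of_nonempty (fun _ _ => one_pos)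
        (fun j hj => hq j (mem_Ioc.1 hj).1.le) ⟨3, mem_Ioc.2 ⟨by omega, by omega⟩⟩

end phiDenom

theorem statement9_general (q : ℕ → ℝ) (hq2 : 2 ≤ q 2)
    (hmono : ∀ n : ℕ, 2 ≤ n → q n ≤ q (n + 1))
    (hent : ∀ x : ℝ, Summable fun k : ℕ => (-1 : ℝ) ^ k * x ^ k / phiDenom q k) :
    0 < ∑' k : ℕ, (-1 : ℝ) ^ k * (q 2) ^ k / phiDenom q k := by
  have hgt : ∀ n, 2 ≤ n → 1 < q n := fun n hn =>
    one_lt_two.trans_le (hq2.trans (monotoneOn_nat_Ici_of_le_succ hmono (le_refl 2) hn hn))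
  have hq3 : 0 < q 3 := one_pos.trans (hgt 3 (by norm_num))
  have hs := hent (q 2)
  rw [← hs.sum_add_tsum_nat_add 4]
  have hhead : ∑ i ∈ range 4, (-1 : ℝ) ^ i * q 2 ^ i / phiDenom q i = 1 - q 2 / q 3 := by
    simp [sum_range_succ, phiDenom, show Icc 2 3 = {2, 3} from rfl]
    field_simp
    ring
  have htail : 0 < ∑' i, (-1 : ℝ) ^ (i + 4) * q 2 ^ (i + 4) / phiDenom q (i + 4) := by
    have hs4 := (summable_nat_add_iff (f := fun k => (-1 : ℝ) ^ k * q 2 ^ k / phiDenom q k) 4).2 hs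
    refine tsum_pos_of_forall_add_pos hs4 fun m => ?_
    have hlt := pow_div_phiDenom_succ_lt q hgt (k := 2 * m + 4) (by omega)
    have heven : Even (2 * m + 4) := ⟨m + 2, by ring⟩
    rw [show 2 * m + 1 + 4 = 2 * m + 4 + 1 by ring, heven.neg_one_pow, heven.add_one.neg_one_pow,
      one_mul, neg_one_mul, neg_div]
    linarith
  have hle : q 2 / q 3 ≤ 1 := (div_le_one hq3).2 (hmono 2 le_rfl)
  linarith

/-- for `φ(x) = 1 - x + ∑_{k≥2} (-1)ᵏ xᵏ / (q₂^{k-1}⋯q_k)` with `q₂ ≥ 2`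
and `q_k` increasing, `φ(q₂) > 0`. -/
theorem statement9 (q : ℕ → ℝ) (hq : ∀ n, 2 ≤ n → 0 < q n) (hq2 : 2 ≤ q 2)
    (hmono : ∀ n : ℕ, 2 ≤ n → q n ≤ q (n + 1))
    (hent : ∀ x : ℝ, Summable fun k : ℕ => (-1 : ℝ) ^ k * x ^ k / phiDenom q k) :
    0 < ∑' k : ℕ, (-1 : ℝ) ^ k * (q 2) ^ k / phiDenom q k :=
  statement9_general q hq2 hmono hent
end

section
/- Let P(z) = 1 - z + z²/a - z³/(a² b) + z⁴/(a³ b² c) be a polynomial with real parameters satisfying 3 ≤ a < 4 and a ≤ b ≤ c. Then min_{0 ≤ θ ≤ 2π} |P(a e^{iθ})| ≥ a/(b² c). -/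
/-!
Put `w = e^{iθ}`, `u = a/b` and `e = a/(b²c)`, so that `P(a w) = 1 - a w + a w² - u w³ + e w⁴`.
Since `w̄ = w⁻¹` and the coefficients are real, `|P(a w)|² = P(a w) · P(a w⁻¹)` is a polynomial
in `x = cos θ = (w + w⁻¹)/2`, namely `e² + D(x)`, and it remains to show `D(x) ≥ 0`.
From `3 ≤ a ≤ b ≤ c` one gets `0 < u ≤ 1` and `9e ≤ u³`; with these and `a ≤ 4`, `D(x)` is for
`x ≤ 1` a nonnegative combination of products of `1 - x`, `1 - u`, `a - 3`, `e` and squares.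
-/

open Complex

def reducedQuartic {R : Type*} [CommRing R] (a u e w : R) : R :=
  1 - a * w + a * w ^ 2 - u * w ^ 3 + e * w ^ 4

def quarticDefect {R : Type*} [CommRing R] (a u e x : R) : R :=
  1 + 2*e - 16*e*x^2 + 16*e*x^4 + 6*u*x - 8*u*x^3 - 2*e*u*x + u^2 - 2*a - 2*a*x + 4*a*x^2
    - 2*a*e + 6*a*e*x + 4*a*e*x^2 - 8*a*e*x^3 - 2*a*u - 2*a*u*x + 4*a*u*x^2 + 2*a^2 - 2*a^2*x

theorem reducedQuartic_mul_reducedQuartic_inv {K : Type*} [Field K] [NeZero (2 : K)]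
    (a u e w : K) (hw : w ≠ 0) :
    reducedQuartic a u e w * reducedQuartic a u e w⁻¹
      = e ^ 2 + quarticDefect a u e ((w + w⁻¹) / 2) := by
  unfold reducedQuartic quarticDefect
  field_simp
  ring

theorem normSq_reducedQuartic_exp (a u e θ : ℝ) :
    normSq (reducedQuartic (a : ℂ) u e (exp (θ * I)))
      = e ^ 2 + quarticDefect a u e (Real.cos θ) := by
  have hconj : starRingEnd ℂ (exp (θ * I)) = (exp (θ * I))⁻¹ := by
    rw [← exp_conj, ← exp_neg, map_mul, conj_ofReal, conj_I, mul_neg]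
  have hcos : (exp (θ * I) + (exp (θ * I))⁻¹) / 2 = Real.cos θ := by
    rw [← exp_neg, ofReal_cos, cos, neg_mul]
  apply ofReal_injective
  rw [← mul_conj]
  simp only [reducedQuartic, map_add, map_sub, map_mul, map_pow, map_one, conj_ofReal, hconj]
  rw [← reducedQuartic, ← reducedQuartic,
    reducedQuartic_mul_reducedQuartic_inv _ _ _ _ (exp_ne_zero _), hcos]
  simp only [quarticDefect]
  push_cast
  ring

theorem quarticDefect_nonneg {a u e x : ℝ} (ha3 : 3 ≤ a) (ha4 : a ≤ 4) (hu0 : 0 ≤ u)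
    (hu1 : u ≤ 1) (he0 : 0 ≤ e) (heu : 9 * e ≤ u ^ 3) (hx1 : x ≤ 1) :
    0 ≤ quarticDefect a u e x := by
  have hu3 : u ^ 3 ≤ u := by nlinarith [mul_nonneg hu0 hu0]
  have h1u : 0 ≤ 1 - u := by linarith
  have h1x : 0 ≤ 1 - x := by linarith
  have ha : 0 ≤ a - 3 := by linarith
  have h1 : 0 ≤ e * (1 - x) ^ 2 * (16 * x ^ 2 + 3 * x + 1) := by
    nlinarith [mul_nonneg he0 (sq_nonneg ((1 - x) * (8 * x + 3 / 4))),
      mul_nonneg he0 (sq_nonneg (1 - x))]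
  have h2 : 0 ≤ (1 - u) * (1 - x) ^ 2 * (24 - 4 * a - e) :=
    mul_nonneg (by positivity) (by linarith)
  have h3 : 0 ≤ (a - 3) * (1 - x) ^ 2 * (8 - 20 * e) :=
    mul_nonneg (by positivity) (by linarith)
  have h4 : 0 ≤ (1 - x) ^ 3 * (8 * u - 5 * e) :=
    mul_nonneg (by positivity) (by linarith)
  unfold quarticDefect
  linarith [sq_nonneg (1 - u), mul_nonneg (mul_nonneg he0 h1u) (sq_nonneg x),
    mul_nonneg he0 h1u, mul_nonneg (mul_nonneg (sq_nonneg (a - 3)) h1x) zero_le_two,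
    mul_nonneg (mul_nonneg h1u ha) h1x, mul_nonneg (mul_nonneg he0 ha) h1x,
    mul_nonneg (mul_nonneg he0 ha) (pow_nonneg h1x 3)]

theorem nine_mul_div_le_div_pow {a b c : ℝ} (ha3 : 3 ≤ a) (hab : a ≤ b) (hbc : b ≤ c) :
    9 * (a / (b ^ 2 * c)) ≤ (a / b) ^ 3 := by
  have ha : 0 < a := by linarith
  have hb : 0 < b := by linarith
  have hc : 0 < c := by linarith
  rw [div_pow, mul_div_assoc', div_le_div_iff₀ (by positivity) (by positivity)]
  have h9c : 9 * b ≤ a ^ 2 * c := by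
    nlinarith [mul_le_mul (by nlinarith : (9 : ℝ) ≤ a ^ 2) hbc hb.le (by positivity)]
  nlinarith [mul_le_mul_of_nonneg_left h9c (by positivity : 0 ≤ a * b ^ 2)]

/-- Lemma 3: for `P(z) = 1 - z + z²/a - z³/(a²b) + z⁴/(a³b²c)` with
`3 ≤ a < 4` and `a ≤ b ≤ c`, one has `min_{0≤θ≤2π} |P(a e^{iθ})| ≥ a/(b²c)`. -/
theorem statement10 (a b c : ℝ) (ha3 : 3 ≤ a) (ha4 : a < 4) (hab : a ≤ b) (hbc : b ≤ c)
    (P : ℂ → ℂ)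
    (hP : ∀ z : ℂ, P z = 1 - z + z ^ 2 / (a : ℂ) - z ^ 3 / ((a : ℂ) ^ 2 * (b : ℂ))
      + z ^ 4 / ((a : ℂ) ^ 3 * (b : ℂ) ^ 2 * (c : ℂ))) :
    ∀ θ ∈ Set.Icc (0 : ℝ) (2 * Real.pi),
      a / (b ^ 2 * c) ≤ ‖P ((a : ℂ) * Complex.exp (θ * Complex.I))‖ := by
  intro θ _
  have ha : 0 < a := by linarith
  have hb : 0 < b := by linarith
  have hc : 0 < c := by linarith
  set u := a / b
  set e := a / (b ^ 2 * c)
  have hPw : P (a * exp (θ * I)) = reducedQuartic (a : ℂ) u e (exp (θ * I)) := by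
    simp only [hP, reducedQuartic, u, e]
    push_cast
    field_simp
  have hD : 0 ≤ quarticDefect a u e (Real.cos θ) :=
    quarticDefect_nonneg ha3 ha4.le (by positivity) (div_le_one_of_le₀ hab hb.le)
      (by positivity) (nine_mul_div_le_div_pow ha3 hab hbc)
      (Real.cos_le_one θ)
  have hsq : e ^ 2 ≤ ‖P (a * exp (θ * I))‖ ^ 2 := by
    rw [Complex.sq_norm, hPw, normSq_reducedQuartic_exp]
    linarith
  exact (pow_le_pow_iff_left₀ (by positivity) (norm_nonneg _) two_ne_zero).1 hsq
end

section
/- Let a, b, c be real numbers with 3 ≤ a < 4 and a ≤ b ≤ c. Then for every y ∈ [0, 2], y⁴ - (bc + a) y³ + (b²c + abc + a - 4) y² - (b²c + ab²c + abc + a/b - 3bc - 3a) y + (b²c/a + 2ab²c + ac - 2b²c - 2abc - 2a + 2) ≥ 0. -/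
/-!
Put `t = 2 - y` and multiply by `a * b`. The coefficients of the resulting quartic in `t`
factor nicely (`mul_quartic_two_sub`); for `3 ≤ a ≤ b ≤ c` all of them are nonnegative except
the linear one, which is at least `-a (b - a)`. As the constant coefficient is at least
`2 a (b - a)` and the quadratic one at least `a (b - a)`, the whole expression is at least
`a (b - a) (t² - t + 2) ≥ 0`.
-/

noncomputable def quartic (a b c y : ℝ) : ℝ :=
  y ^ 4 - (b * c + a) * y ^ 3 + (b ^ 2 * c + a * b * c + a - 4) * y ^ 2
    - (b ^ 2 * c + a * b ^ 2 * c + a * b * c + a / b - 3 * b * c - 3 * a) * y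
    + (b ^ 2 * c / a + 2 * a * b ^ 2 * c + a * c - 2 * b ^ 2 * c - 2 * a * b * c - 2 * a + 2)

theorem mul_quartic_two_sub {a b : ℝ} (c t : ℝ) (ha : a ≠ 0) (hb : b ≠ 0) :
    a * b * quartic a b c (2 - t) =
      (b - a) * (b * c * (b - a) + 2 * a)
        + a * ((a - 3) * (b - 3) * b ^ 2 * c + 5 * a * b - 16 * b + a) * t
        + a * b * (b * c * (a + b - 6) + 20 - 5 * a) * t ^ 2
        + a * b * (b * c + a - 8) * t ^ 3 + a * b * t ^ 4 := by
  unfold quartic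
  field_simp
  ring

theorem mul_quartic_two_sub_ge {a b c t : ℝ} (ha : 3 ≤ a) (hab : a ≤ b) (hbc : b ≤ c)
    (ht : 0 ≤ t) : a * (b - a) * (t ^ 2 - t + 2) ≤ a * b * quartic a b c (2 - t) := by
  have hb : 3 ≤ b := ha.trans hab
  have hc : 3 ≤ c := hb.trans hbc
  have hconst : 2 * a * (b - a) ≤ (b - a) * (b * c * (b - a) + 2 * a) := by
    have : 0 ≤ b * c * (b - a) ^ 2 := by positivity
    linarith
  have hlin : -(a * (b - a)) ≤ a * ((a - 3) * (b - 3) * b ^ 2 * c + 5 * a * b - 16 * b + a) := by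
    have : 0 ≤ a * ((a - 3) * (b - 3) * b ^ 2 * c + 5 * b * (a - 3)) := by
      have : 0 ≤ a - 3 := by linarith
      have : 0 ≤ b - 3 := by linarith
      positivity
    linarith
  have hquad : a * (b - a) ≤ a * b * (b * c * (a + b - 6) + 20 - 5 * a) := by
    have : 9 * (a + b - 6) ≤ b * c * (a + b - 6) :=
      mul_le_mul_of_nonneg_right (by nlinarith) (by linarith)
    have : a * b * 1 ≤ a * b * (b * c * (a + b - 6) + 20 - 5 * a) :=
      mul_le_mul_of_nonneg_left (by linarith) (by positivity)
    nlinarith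
  have hcubic : 0 ≤ a * b * (b * c + a - 8) := by
    have : 9 ≤ b * c := by nlinarith
    have : 0 ≤ b * c + a - 8 := by linarith
    positivity
  rw [mul_quartic_two_sub c t (by positivity) (by positivity)]
  have := mul_le_mul_of_nonneg_right hlin ht
  have := mul_le_mul_of_nonneg_right hquad (sq_nonneg t)
  have : 0 ≤ a * b * (b * c + a - 8) * t ^ 3 := by positivity
  have : 0 ≤ a * b * t ^ 4 := by positivity
  linarith

theorem quartic_nonneg {a b c y : ℝ} (ha : 3 ≤ a) (hab : a ≤ b) (hbc : b ≤ c)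
    (hy : y ≤ 2) : 0 ≤ quartic a b c y := by
  obtain ⟨t, ht, rfl⟩ : ∃ t, 0 ≤ t ∧ y = 2 - t := ⟨2 - y, by linarith, by ring⟩
  have hab0 : 0 < a * b := mul_pos (by linarith) (by linarith)
  refine nonneg_of_mul_nonneg_right ?_ hab0
  refine le_trans ?_ (mul_quartic_two_sub_ge ha hab hbc ht)
  have : 0 < t ^ 2 - t + 2 := by nlinarith [sq_nonneg (t - 1 / 2)]
  have : 0 ≤ b - a := sub_nonneg.mpr hab
  positivity

theorem statement11_general (a b c : ℝ) (ha3 : 3 ≤ a) (hab : a ≤ b) (hbc : b ≤ c) :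
    ∀ y ∈ Set.Icc (0 : ℝ) 2,
      0 ≤ y ^ 4 - (b * c + a) * y ^ 3 + (b ^ 2 * c + a * b * c + a - 4) * y ^ 2
        - (b ^ 2 * c + a * b ^ 2 * c + a * b * c + a / b - 3 * b * c - 3 * a) * y
        + (b ^ 2 * c / a + 2 * a * b ^ 2 * c + a * c - 2 * b ^ 2 * c - 2 * a * b * c
            - 2 * a + 2) :=
  fun _ hy => quartic_nonneg ha3 hab hbc hy.2

/-- for `3 ≤ a < 4`, `a ≤ b ≤ c` and every `y ∈ [0, 2]`,
`y⁴ - (bc+a)y³ + (b²c+abc+a-4)y² - (b²c+ab²c+abc+a/b-3bc-3a)y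
  + (b²c/a+2ab²c+ac-2b²c-2abc-2a+2) ≥ 0`. -/
theorem statement11 (a b c : ℝ) (ha3 : 3 ≤ a) (ha4 : a < 4) (hab : a ≤ b) (hbc : b ≤ c) :
    ∀ y ∈ Set.Icc (0 : ℝ) 2,
      0 ≤ y ^ 4 - (b * c + a) * y ^ 3 + (b ^ 2 * c + a * b * c + a - 4) * y ^ 2
        - (b ^ 2 * c + a * b ^ 2 * c + a * b * c + a / b - 3 * b * c - 3 * a) * y
        + (b ^ 2 * c / a + 2 * a * b ^ 2 * c + a * c - 2 * b ^ 2 * c - 2 * a * b * c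
            - 2 * a + 2) :=
  statement11_general a b c ha3 hab hbc
end

section
/- Let S_4(z) = 1 - z + z²/q_2 - z³/(q_2² q_3) + z⁴/(q_2³ q_3² q_4) be a polynomial with q_2, q_3, q_4 > 0 and q_2 ≥ 3. Then S_4 has at least one (complex) root in the closed disk {z : |z| ≤ q_2}. -/
/-!
If no root of `S₄` lies in the disk `|z| ≤ q₂`, the reversed polynomial `P(w) = w⁴ S₄(1/w)` has
all four roots in the open disk `|w| < a`, where `a = 1/q₂`. Every `s` in that disk satisfies
`Re 1/(a - s) ≥ 1/(2a)`, so summing the logarithmic derivative `P'/P = Σ 1/(w - s)` over the roots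
gives `2 P(a) ≤ a P'(a)`; moreover `P(a) > 0`, since the monic real polynomial `P` has no real root
`≥ a`. For `a ≤ 1/3` the coefficients of `P` force `a P'(a) < 2 P(a)` instead.
-/

open Polynomial

noncomputable def S4 (q2 q3 q4 : ℝ) (z : ℂ) : ℂ :=
  1 - z + z ^ 2 / (q2 : ℂ) - z ^ 3 / ((q2 : ℂ) ^ 2 * (q3 : ℂ))
    + z ^ 4 / ((q2 : ℂ) ^ 3 * (q3 : ℂ) ^ 2 * (q4 : ℂ))

/-- `X⁴ S₄(1/X)`, whose roots are the reciprocals of those of `S₄`. -/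
noncomputable def reversedS4 (q2 q3 q4 : ℝ) : ℝ[X] :=
  X ^ 4 - X ^ 3 + C q2⁻¹ * X ^ 2 - C (q2 ^ 2 * q3)⁻¹ * X + C (q2 ^ 3 * q3 ^ 2 * q4)⁻¹

theorem Complex.inv_two_mul_le_re_inv_sub {r : ℝ} {s : ℂ} (hs : ‖s‖ < r) :
    (2 * r)⁻¹ ≤ (((r : ℂ) - s)⁻¹).re := by
  have hr : 0 < r := (norm_nonneg s).trans_lt hs
  have hsr : s.re < r := (Complex.re_le_norm s).trans_lt hs
  have hnormSq : s.re * s.re + s.im * s.im < r ^ 2 := by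
    rw [← Complex.normSq_apply, ← Complex.sq_norm]
    gcongr
  rw [Complex.inv_re, Complex.normSq_apply]
  simp only [Complex.sub_re, Complex.sub_im, Complex.ofReal_re, Complex.ofReal_im]
  rw [inv_eq_one_div, div_le_div_iff₀ (by positivity) (by nlinarith)]
  nlinarith

theorem Polynomial.natDegree_div_two_mul_le_re_eval_derivative_div_eval {p : ℂ[X]} {r : ℝ}
    (hroots : ∀ s ∈ p.roots, ‖s‖ < r) :
    p.natDegree / (2 * r) ≤ (p.derivative.eval (r : ℂ) / p.eval (r : ℂ)).re := by
  by_cases hp : p = 0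
  · simp [hp]
  have hpr : p.eval (r : ℂ) ≠ 0 := fun h => by
    simpa [abs_lt] using hroots _ ((mem_roots hp).mpr h)
  rw [(IsAlgClosed.splits p).eval_derivative_div_eval_of_ne_zero hpr,
    ← IsAlgClosed.card_roots_eq_natDegree, div_eq_mul_inv, ← nsmul_eq_mul]
  simp only [one_div]
  rw [show ∀ m : Multiset ℂ, m.sum.re = (m.map Complex.re).sum from
    map_multiset_sum Complex.reAddGroupHom, Multiset.map_map]
  calc p.roots.card • (2 * r)⁻¹ = (p.roots.map fun _ => (2 * r)⁻¹).sum := by simp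
    _ ≤ (p.roots.map fun s => (((r : ℂ) - s)⁻¹).re).sum :=
      Multiset.sum_map_le_sum_map _ _ fun s hs => Complex.inv_two_mul_le_re_inv_sub (hroots s hs)

theorem Polynomial.natDegree_div_two_mul_le_eval_derivative_div_eval {P : ℝ[X]} {r : ℝ}
    (hroots : ∀ s ∈ P.aroots ℂ, ‖s‖ < r) :
    P.natDegree / (2 * r) ≤ P.derivative.eval r / P.eval r := by
  have := (P.map (algebraMap ℝ ℂ)).natDegree_div_two_mul_le_re_eval_derivative_div_eval hroots
  have hcast (Q : ℝ[X]) : aeval (r : ℂ) Q = ((Q.eval r : ℝ) : ℂ) := (ofReal_eval Q r).symm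
  rwa [natDegree_map, derivative_map, eval_map_algebraMap, eval_map_algebraMap,
    hcast, hcast, ← Complex.ofReal_div, Complex.ofReal_re] at this

theorem Polynomial.Monic.eval_pos_of_forall_isRoot_lt {P : ℝ[X]} (hP : P.Monic) {a : ℝ}
    (h : ∀ t, P.IsRoot t → t < a) : 0 < P.eval a := by
  rcases le_or_gt P.degree 0 with hdeg | hdeg
  · simp [hP.degree_le_zero_iff_eq_one.mp hdeg]
  obtain ⟨M, hM, haM⟩ := ((P.tendsto_atTop_of_leadingCoeff_nonneg hdeg
    (by simp [hP.leadingCoeff])).eventually_gt_atTop 0 |>.and (Filter.eventually_ge_atTop a)).exists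
  by_contra! hPa
  obtain ⟨t, ht, hPt⟩ := intermediate_value_Icc haM P.continuous.continuousOn ⟨hPa, hM.le⟩
  exact (h t hPt).not_ge ht.1

theorem aeval_reversedS4 (q2 q3 q4 : ℝ) {w : ℂ} (hw : w ≠ 0) :
    aeval w (reversedS4 q2 q3 q4) = w ^ 4 * S4 q2 q3 q4 w⁻¹ := by
  simp only [reversedS4, S4, map_add, map_sub, map_mul, map_pow, aeval_X, aeval_C,
    Complex.coe_algebraMap, map_inv₀, mul_inv_rev, inv_pow]
  field_simp

theorem reversedS4_monic (q2 q3 q4 : ℝ) : (reversedS4 q2 q3 q4).Monic := by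
  unfold reversedS4; monicity!

theorem natDegree_reversedS4 (q2 q3 q4 : ℝ) : (reversedS4 q2 q3 q4).natDegree = 4 := by
  unfold reversedS4; compute_degree!

theorem aeval_zero_reversedS4 (q2 q3 q4 : ℝ) :
    aeval (0 : ℂ) (reversedS4 q2 q3 q4) = ((q2 ^ 3 * q3 ^ 2 * q4)⁻¹ : ℝ) := by
  simp [reversedS4]

theorem mul_eval_derivative_reversedS4_lt {q2 q3 q4 : ℝ} (h3 : 0 < q3) (h4 : 0 < q4)
    (hq2 : 3 ≤ q2) (hpos : 0 < (reversedS4 q2 q3 q4).eval q2⁻¹) :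
    q2⁻¹ * (reversedS4 q2 q3 q4).derivative.eval q2⁻¹ < 2 * (reversedS4 q2 q3 q4).eval q2⁻¹ := by
  set a := q2⁻¹ with ha_def
  set e3 := (q2 ^ 2 * q3)⁻¹
  set e4 := (q2 ^ 3 * q3 ^ 2 * q4)⁻¹
  have ha0 : 0 < a := by positivity
  have ha : 3 * a ≤ 1 := by rw [ha_def, ← div_eq_mul_inv, div_le_one (by positivity)]; exact hq2
  have he4 : 0 < e4 := by positivity
  have hP : (reversedS4 q2 q3 q4).eval a = a ^ 4 - e3 * a + e4 := by
    simp only [reversedS4, eval_add, eval_sub, eval_mul, eval_pow, eval_X, eval_C]; ring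
  have hP' : (reversedS4 q2 q3 q4).derivative.eval a = 4 * a ^ 3 - a ^ 2 - e3 := by
    simp only [reversedS4, derivative_add, derivative_sub, derivative_mul, derivative_X_pow,
      derivative_C, derivative_X, eval_add, eval_sub, eval_mul, eval_pow, eval_C, eval_X,
      eval_zero, eval_one]
    ring
  rw [hP] at hpos
  rw [hP, hP']
  nlinarith [mul_nonneg (pow_pos ha0 3).le (sub_nonneg.2 ha)]

theorem norm_lt_inv_of_mem_aroots_reversedS4 {q2 q3 q4 : ℝ} (h2 : 0 < q2) (h3 : q3 ≠ 0)
    (h4 : q4 ≠ 0) (hS : ∀ z : ℂ, ‖z‖ ≤ q2 → S4 q2 q3 q4 z ≠ 0) {w : ℂ}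
    (hw : w ∈ (reversedS4 q2 q3 q4).aroots ℂ) : ‖w‖ < q2⁻¹ := by
  have hPw : aeval w (reversedS4 q2 q3 q4) = 0 := (mem_aroots.mp hw).2
  have hw0 : w ≠ 0 := by
    rintro rfl
    rw [aeval_zero_reversedS4, Complex.ofReal_eq_zero] at hPw
    exact (by positivity : (q2 ^ 3 * q3 ^ 2 * q4)⁻¹ ≠ 0) hPw
  rw [aeval_reversedS4 q2 q3 q4 hw0] at hPw
  have hlt : q2 < ‖w⁻¹‖ :=
    lt_of_not_ge fun hle => hS w⁻¹ hle ((mul_eq_zero.mp hPw).resolve_left (pow_ne_zero 4 hw0))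
  rwa [norm_inv, lt_inv_comm₀ h2 (norm_pos_iff.mpr hw0)] at hlt

theorem statement13_general (q2 q3 q4 : ℝ) (h3 : 0 < q3) (h4 : 0 < q4)
    (hq2 : 3 ≤ q2) :
    ∃ z : ℂ, ‖z‖ ≤ q2 ∧
      1 - z + z ^ 2 / (q2 : ℂ) - z ^ 3 / ((q2 : ℂ) ^ 2 * (q3 : ℂ))
        + z ^ 4 / ((q2 : ℂ) ^ 3 * (q3 : ℂ) ^ 2 * (q4 : ℂ)) = 0 := by
  by_contra! hS
  have hmonic := reversedS4_monic q2 q3 q4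
  have hroots : ∀ w ∈ (reversedS4 q2 q3 q4).aroots ℂ, ‖w‖ < q2⁻¹ := fun w =>
    norm_lt_inv_of_mem_aroots_reversedS4 (by linarith) h3.ne' h4.ne' hS
  have hpos : 0 < (reversedS4 q2 q3 q4).eval q2⁻¹ := hmonic.eval_pos_of_forall_isRoot_lt
    fun t ht => by
      have hPt : aeval (t : ℂ) (reversedS4 q2 q3 q4) = 0 :=
        (ofReal_eval _ t).symm.trans (by simp [ht.eq_zero])
      have := hroots t (mem_aroots.mpr ⟨hmonic.ne_zero, hPt⟩)
      rw [Complex.norm_real, Real.norm_eq_abs] at this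
      exact (le_abs_self t).trans_lt this
  have hlog := natDegree_div_two_mul_le_eval_derivative_div_eval hroots
  rw [natDegree_reversedS4, div_le_div_iff₀ (by positivity) hpos] at hlog
  push_cast at hlog
  linarith [mul_eval_derivative_reversedS4_lt h3 h4 hq2 hpos]

/-- Lemma 5: for `q₂, q₃, q₄ > 0` with `q₂ ≥ 3`, the polynomial
`S₄(z) = 1 - z + z²/q₂ - z³/(q₂²q₃) + z⁴/(q₂³q₃²q₄)` has at least one complex root
in the closed disk `{z : |z| ≤ q₂}`. -/
theorem statement13 (q2 q3 q4 : ℝ) (h2 : 0 < q2) (h3 : 0 < q3) (h4 : 0 < q4)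
    (hq2 : 3 ≤ q2) :
    ∃ z : ℂ, ‖z‖ ≤ q2 ∧
      1 - z + z ^ 2 / (q2 : ℂ) - z ^ 3 / ((q2 : ℂ) ^ 2 * (q3 : ℂ))
        + z ^ 4 / ((q2 : ℂ) ^ 3 * (q3 : ℂ) ^ 2 * (q4 : ℂ)) = 0 :=
  statement13_general q2 q3 q4 h3 h4 hq2
end

section
/- Let q_2, q_3, q_4 be real numbers with 3 ≤ q_2 < 4 and q_2 ≤ q_3 ≤ q_4, and let S_4(z) = 1 - z + z²/q_2 - z³/(q_2² q_3) + z⁴/(q_2³ q_3² q_4). Then min_{0 ≤ θ ≤ 2π} |S_4(q_2 e^{iθ})| ≥ q_2/(q_3² q_4); in particular S_4 has no zeros on the circle {z : |z| = q_2}. -/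
/-!
Clearing denominators, `a³b²c · S₄(z) = bc · u(z) + z⁴` with `u(z) = a³b(1 - z) + a²bz² - az³`, so
`|a³b²c · S₄(z)|² = |z|⁸ + bc (bc |u|² + 2 Re (u z̄⁴))`. As `c ≥ b`, it suffices to show
`b²|u|² + 2 Re (u z̄⁴) ≥ 0` on the circle `|z| = a`, for then `|a³b²c · S₄(z)| ≥ a⁴`.
On that circle `z² = 2xz - a²` with `x = Re z`, so `u` and `z⁴` are real-affine in `z` and the
quantity becomes a polynomial in `a, b, x`. In the variables `a - 3, b - a, a - x ≥ 0` it has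
nonnegative coefficients once the single square `(243/2)(b - a)(a - x - 6)²` is split off.
-/

open Complex ComplexConjugate

theorem norm_le_norm_ofReal_mul_add {u v : ℂ} {r : ℝ} (hr : 0 ≤ r)
    (h : 0 ≤ r * normSq u + 2 * (u * conj v).re) : ‖v‖ ≤ ‖(r : ℂ) * u + v‖ := by
  have hsq : normSq v ≤ normSq ((r : ℂ) * u + v) := by
    have : normSq ((r : ℂ) * u + v) = normSq v + r * (r * normSq u + 2 * (u * conj v).re) := by
      rw [normSq_add, normSq_mul, normSq_ofReal, mul_assoc (r : ℂ), re_ofReal_mul]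
      ring
    rw [this]
    exact le_add_of_nonneg_right (mul_nonneg hr h)
  simpa only [norm_def] using Real.sqrt_le_sqrt hsq

theorem sq_eq_two_re_mul_sub_normSq (z : ℂ) : z ^ 2 = 2 * z.re * z - normSq z := by
  have hre := add_conj z
  have hns := mul_conj z
  push_cast at hre hns
  linear_combination z * hre - hns

theorem normSq_ofReal_mul_add_ofReal (α β : ℝ) (z : ℂ) :
    normSq (α * z + β) = α ^ 2 * normSq z + 2 * α * β * z.re + β ^ 2 := by
  simp only [normSq_apply, add_re, add_im, re_ofReal_mul, im_ofReal_mul, ofReal_re, ofReal_im]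
  ring

theorem re_ofReal_mul_add_ofReal_mul_conj (α β γ δ : ℝ) (z : ℂ) :
    ((α * z + β) * conj (γ * z + δ)).re
      = α * γ * normSq z + (α * δ + β * γ) * z.re + β * δ := by
  simp only [normSq_apply, mul_re, add_re, add_im, map_add, map_mul, conj_ofReal, conj_re,
    conj_im, im_ofReal_mul, ofReal_re, ofReal_im]
  ring

theorem circle_polynomial_nonneg {a b x α β γ δ : ℝ} (ha : 3 ≤ a) (hb : a ≤ b) (hx : x ≤ a)
    (hα : α = -a ^ 3 * b + 2 * a ^ 2 * b * x - 4 * a * x ^ 2 + a ^ 3)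
    (hβ : β = a ^ 3 * b - a ^ 4 * b + 2 * a ^ 3 * x)
    (hγ : γ = 8 * x ^ 3 - 4 * a ^ 2 * x) (hδ : δ = a ^ 4 - 4 * a ^ 2 * x ^ 2) :
    0 ≤ b ^ 2 * (α ^ 2 * a ^ 2 + 2 * α * β * x + β ^ 2)
      + 2 * (α * γ * a ^ 2 + (α * δ + β * γ) * x + β * δ) := by
  have hsplit : 0 ≤ 243 / 2 * (b - a) * (a - x - 6) ^ 2 := by
    have := sub_nonneg.2 hb
    positivity
  refine hsplit.trans (sub_nonneg.1 ?_)
  subst hα hβ hγ hδ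
  obtain ⟨s, hs, rfl⟩ : ∃ s, 0 ≤ s ∧ a = 3 + s := ⟨a - 3, by linarith, by ring⟩
  obtain ⟨d, hd, rfl⟩ : ∃ d, 0 ≤ d ∧ b = 3 + s + d := ⟨b - (3 + s), by linarith, by ring⟩
  obtain ⟨t, ht, rfl⟩ : ∃ t, 0 ≤ t ∧ x = 3 + s - t := ⟨3 + s - x, by linarith, by ring⟩
  ring_nf
  positivity

theorem circle_form_nonneg {a b : ℝ} (ha : 3 ≤ a) (hb : a ≤ b) {z u : ℂ} (hz : ‖z‖ = a)
    (hu : u = a ^ 3 * b * (1 - z) + a ^ 2 * b * z ^ 2 - a * z ^ 3) :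
    0 ≤ b ^ 2 * normSq u + 2 * (u * conj (z ^ 4)).re := by
  set x := z.re
  have hnorm : normSq z = a ^ 2 := by rw [← Complex.sq_norm, hz]
  have hz2 : z ^ 2 = 2 * x * z - a ^ 2 := by
    rw [sq_eq_two_re_mul_sub_normSq, hnorm]
    push_cast
    ring
  have hu_affine : u = ((-a ^ 3 * b + 2 * a ^ 2 * b * x - 4 * a * x ^ 2 + a ^ 3 : ℝ) : ℂ) * z
      + ((a ^ 3 * b - a ^ 4 * b + 2 * a ^ 3 * x : ℝ) : ℂ) := by
    push_cast
    linear_combination hu + (a ^ 2 * b - 2 * a * x - a * z) * hz2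
  have hz4_affine : z ^ 4 = ((8 * x ^ 3 - 4 * a ^ 2 * x : ℝ) : ℂ) * z
      + ((a ^ 4 - 4 * a ^ 2 * x ^ 2 : ℝ) : ℂ) := by
    push_cast
    linear_combination (z ^ 2 + 2 * x * z + 4 * x ^ 2 - a ^ 2) * hz2
  rw [hu_affine, hz4_affine, normSq_ofReal_mul_add_ofReal, re_ofReal_mul_add_ofReal_mul_conj, hnorm]
  exact circle_polynomial_nonneg ha hb (hz ▸ re_le_norm z) rfl rfl rfl rfl

noncomputable def fourthSection (a b c : ℝ) (z : ℂ) : ℂ :=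
  1 - z + z ^ 2 / (a : ℂ) - z ^ 3 / ((a : ℂ) ^ 2 * (b : ℂ))
    + z ^ 4 / ((a : ℂ) ^ 3 * (b : ℂ) ^ 2 * (c : ℂ))

theorem div_le_norm_fourthSection {a b c : ℝ} (ha : 3 ≤ a) (hab : a ≤ b) (hbc : b ≤ c) {z : ℂ}
    (hz : ‖z‖ = a) : a / (b ^ 2 * c) ≤ ‖fourthSection a b c z‖ := by
  have ha0 : 0 < a := by linarith
  have hb0 : 0 < b := by linarith
  have hc0 : 0 < c := by linarith
  set u : ℂ := a ^ 3 * b * (1 - z) + a ^ 2 * b * z ^ 2 - a * z ^ 3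
  have hclear : ((a ^ 3 * b ^ 2 * c : ℝ) : ℂ) * fourthSection a b c z
      = ((b * c : ℝ) : ℂ) * u + z ^ 4 := by
    have : (a : ℂ) ≠ 0 := ofReal_ne_zero.2 ha0.ne'
    have : (b : ℂ) ≠ 0 := ofReal_ne_zero.2 hb0.ne'
    have : (c : ℂ) ≠ 0 := ofReal_ne_zero.2 hc0.ne'
    simp only [fourthSection, u]
    push_cast
    field_simp
  have hform : 0 ≤ b * c * normSq u + 2 * (u * conj (z ^ 4)).re := by
    have : b ^ 2 * normSq u ≤ b * c * normSq u :=
      mul_le_mul_of_nonneg_right (by nlinarith) (normSq_nonneg u)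
    linarith [circle_form_nonneg ha hab hz rfl]
  have hlow : a ^ 4 ≤ a ^ 3 * b ^ 2 * c * ‖fourthSection a b c z‖ := by
    have := norm_le_norm_ofReal_mul_add (by positivity) hform
    rwa [← hclear, norm_pow, hz, norm_mul, norm_real, Real.norm_of_nonneg (by positivity)] at this
  rw [div_le_iff₀ (by positivity)]
  nlinarith [pow_pos ha0 3]

theorem statement15_general (q2 q3 q4 : ℝ) (h1 : 3 ≤ q2) (h3 : q2 ≤ q3)
    (h4 : q3 ≤ q4) (S4 : ℂ → ℂ)
    (hS4 : ∀ z : ℂ, S4 z = 1 - z + z ^ 2 / (q2 : ℂ) - z ^ 3 / ((q2 : ℂ) ^ 2 * (q3 : ℂ))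
      + z ^ 4 / ((q2 : ℂ) ^ 3 * (q3 : ℂ) ^ 2 * (q4 : ℂ))) :
    (∀ θ ∈ Set.Icc (0 : ℝ) (2 * Real.pi),
      q2 / (q3 ^ 2 * q4) ≤ ‖S4 ((q2 : ℂ) * Complex.exp (θ * Complex.I))‖) ∧
    ∀ z : ℂ, ‖z‖ = q2 → S4 z ≠ 0 := by
  have hS4 : S4 = fourthSection q2 q3 q4 := funext hS4
  have hbound (z : ℂ) (hz : ‖z‖ = q2) : q2 / (q3 ^ 2 * q4) ≤ ‖S4 z‖ :=
    hS4 ▸ div_le_norm_fourthSection h1 h3 h4 hz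
  have hpos : 0 < q2 / (q3 ^ 2 * q4) := by
    have : 0 < q3 := by linarith
    have : 0 < q4 := by linarith
    positivity
  refine ⟨fun θ _ => hbound _ ?_, fun z hz => norm_pos_iff.1 (hpos.trans_le (hbound z hz))⟩
  rw [norm_mul, norm_exp_ofReal_mul_I, norm_real, Real.norm_of_nonneg (by linarith), mul_one]

/-- for `3 ≤ q₂ < 4` and `q₂ ≤ q₃ ≤ q₄`, the fourth section
`S₄(z) = 1 - z + z²/q₂ - z³/(q₂²q₃) + z⁴/(q₂³q₃²q₄)` satisfies
`min_{0≤θ≤2π} |S₄(q₂e^{iθ})| ≥ q₂/(q₃²q₄)`; in particular `S₄` has no zeros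
on the circle `{z : |z| = q₂}`. -/
theorem statement15 (q2 q3 q4 : ℝ) (h1 : 3 ≤ q2) (h2 : q2 < 4) (h3 : q2 ≤ q3)
    (h4 : q3 ≤ q4) (S4 : ℂ → ℂ)
    (hS4 : ∀ z : ℂ, S4 z = 1 - z + z ^ 2 / (q2 : ℂ) - z ^ 3 / ((q2 : ℂ) ^ 2 * (q3 : ℂ))
      + z ^ 4 / ((q2 : ℂ) ^ 3 * (q3 : ℂ) ^ 2 * (q4 : ℂ))) :
    (∀ θ ∈ Set.Icc (0 : ℝ) (2 * Real.pi),
      q2 / (q3 ^ 2 * q4) ≤ ‖S4 ((q2 : ℂ) * Complex.exp (θ * Complex.I))‖) ∧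
    ∀ z : ℂ, ‖z‖ = q2 → S4 z ≠ 0 :=
  statement15_general q2 q3 q4 h1 h3 h4 S4 hS4
end
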